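/- arXiv:2507.10909 — 2 statements merged into one kernel-verified Lean document; each statement's English description precedes it below -/
import Mathlib

section
/- Let G be a topological gyrogroup and H an L-subgyrogroup of G. Endow the set G/H of left cosets with the quotient topology induced by the map P : G → G/H, P(x) = x ⊕ H. Then P is an open map. -/
open Set Topology

universe u

class Gyrogroup (G : Type u) where
  op : G → G → G
  one : G
  inv : G → G
  gyr : G → G → G ≃ G
  one_op : ∀ g, op one g = g
  op_one : ∀ g, op g one = g
  inv_op : ∀ g, op (inv g) g = one
  op_inv : ∀ g, op g (inv g) = one
  unique_one : ∀ e : G, (∀ g, op e g = g ∧ op g e = g) → e = one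
  unique_inv : ∀ g h : G, (op h g = one ∧ op g h = one) → h = inv g
  gyr_op : ∀ g h f, op g (op h f) = op (op g h) (gyr g h f)
  gyr_hom : ∀ g h a b, gyr g h (op a b) = op (gyr g h a) (gyr g h b)
  loop : ∀ g h, gyr g h = gyr (op g h) h

namespace Gyrogroup

variable {G : Type u} [Gyrogroup G]

/-- `H` is a subgyrogroup: nonempty and a gyrogroup under the restricted operations. -/
def IsSubgyrogroup (H : Set G) : Prop :=
  H.Nonempty ∧ one ∈ H ∧
  (∀ a ∈ H, ∀ b ∈ H, op a b ∈ H) ∧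
  (∀ a ∈ H, inv a ∈ H) ∧
  (∀ a ∈ H, ∀ b ∈ H, Set.BijOn (gyr a b) H H)

/-- `H` is an L-subgyrogroup: `gyr g h` fixes `H` setwise for every `g ∈ G`, `h ∈ H`. -/
def IsLSubgyrogroup (H : Set G) : Prop :=
  IsSubgyrogroup H ∧ ∀ g : G, ∀ h ∈ H, (gyr g h) '' H = H

def leftCoset (a : G) (H : Set G) : Set G := (fun h => op a h) '' H

/-- The subgyrogroup generated by `S`. -/
def generatedSubgyrogroup (S : Set G) : Set G :=
  ⋂₀ {H : Set G | IsSubgyrogroup H ∧ S ⊆ H}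

/-- The gyrogroup operations are continuous (topological gyrogroup). -/
def ContinuousGyroOps (G : Type u) [Gyrogroup G] [TopologicalSpace G] : Prop :=
  Continuous (fun p : G × G => op p.1 p.2) ∧ Continuous (inv : G → G)

/-- The topology coincides with the order topology of some linear order. -/
def TopologicallyOrderable (G : Type u) [t : TopologicalSpace G] : Prop :=
  ∃ l : LinearOrder G, t = TopologicalSpace.generateFrom
      {s : Set G | ∃ a : G, s = {x | l.lt a x} ∨ s = {x | l.lt x a}}

/-- A strongly topological gyrogroup: a topological gyrogroup with a neighborhood base
at `1` whose members are invariant under all gyroautomorphisms. -/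
def StronglyTopologicalGyrogroup (G : Type u) [Gyrogroup G] [TopologicalSpace G] : Prop :=
  ContinuousGyroOps G ∧
  ∃ 𝒰 : Set (Set G), (∀ U ∈ 𝒰, U ∈ nhds (one : G)) ∧
    (∀ V ∈ nhds (one : G), ∃ U ∈ 𝒰, U ⊆ V) ∧
    (∀ U ∈ 𝒰, ∀ x y : G, (gyr x y) '' U = U)

def StronglyTopologicallyOrderable (G : Type u) [Gyrogroup G] [TopologicalSpace G] : Prop :=
  StronglyTopologicalGyrogroup G ∧ TopologicallyOrderable G

end Gyrogroup

/-!
If `x ⊕ H` meets an open set `U`, say `x ⊕ h ∈ U`, then `x ⊕ H = (x ⊕ h) ⊕ H` because `H` is an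
L-subgyrogroup. Hence the saturation `P⁻¹(P U)` is the union of the right translates
`(· ⊕ h)⁻¹' U`, `h ∈ H`, each open by continuity of `⊕`; so `P U` is open in the quotient topology.
-/

namespace Gyrogroup

variable {G : Type u} [Gyrogroup G]

theorem inv_op_op_eq_gyr_one (a b : G) : op (inv a) (op a b) = gyr one a b := by
  rw [gyr_op, inv_op, one_op, loop, inv_op]

theorem op_left_injective (a : G) : Function.Injective (op a) := fun x y hxy => by
  have h := congrArg (op (inv a)) hxy
  rw [inv_op_op_eq_gyr_one, inv_op_op_eq_gyr_one] at h
  exact (gyr one a).injective h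

theorem gyr_one_apply (a b : G) : gyr one a b = b := by
  have h := gyr_op (G := G) one a b
  rw [one_op, one_op] at h
  exact (op_left_injective a h).symm

theorem inv_op_op (a b : G) : op (inv a) (op a b) = b := by
  rw [inv_op_op_eq_gyr_one, gyr_one_apply]

theorem inv_inv (a : G) : inv (inv a) = a :=
  (unique_inv (inv a) a ⟨op_inv a, inv_op a⟩).symm

theorem op_inv_op (a b : G) : op a (op (inv a) b) = b := by
  simpa only [inv_inv] using inv_op_op (inv a) b

theorem mem_leftCoset_self {H : Set G} (hH : one ∈ H) (x : G) : x ∈ leftCoset x H :=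
  ⟨one, hH, op_one x⟩

theorem leftCoset_op_of_mem {H : Set G} (hH : IsLSubgyrogroup H) (x : G) {h : G} (hh : h ∈ H) :
    leftCoset (op x h) H = leftCoset x H := by
  obtain ⟨⟨-, -, hop, hinv, -⟩, hgyr⟩ := hH
  apply Subset.antisymm
  · rintro - ⟨k, hk, rfl⟩
    rw [← hgyr x h hh] at hk
    obtain ⟨f, hf, rfl⟩ := hk
    exact ⟨op h f, hop h hh f hf, gyr_op x h f⟩
  · rintro - ⟨k, hk, rfl⟩
    have hk' : gyr x h (op (inv h) k) ∈ H :=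
      hgyr x h hh ▸ mem_image_of_mem _ (hop _ (hinv h hh) k hk)
    exact ⟨_, hk', (gyr_op x h _).symm.trans (congrArg (op x) (op_inv_op h k))⟩

theorem preimage_image_leftCoset {H : Set G} (hH : IsLSubgyrogroup H) (U : Set G) :
    (leftCoset · H) ⁻¹' ((leftCoset · H) '' U) = ⋃ h ∈ H, (op · h) ⁻¹' U := by
  ext x
  simp only [mem_preimage, mem_image, mem_iUnion]
  constructor
  · rintro ⟨u, hu, hux⟩
    obtain ⟨h, hh, rfl⟩ : u ∈ leftCoset x H := hux ▸ mem_leftCoset_self hH.1.2.1 u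
    exact ⟨h, hh, hu⟩
  · rintro ⟨h, hh, hx⟩
    exact ⟨op x h, hx, leftCoset_op_of_mem hH x hh⟩

end Gyrogroup

open Gyrogroup

/-- The natural map `P : G → G/H`, `P x = x ⊕ H`, is open for the quotient topology. -/
theorem stmt3 {G : Type u} [Gyrogroup G] [t : TopologicalSpace G]
    (hc : ContinuousGyroOps G) (H : Set G) (hH : IsLSubgyrogroup H) :
    @IsOpenMap G (Set G) t (TopologicalSpace.coinduced (fun x : G => leftCoset x H) t)
      (fun x : G => leftCoset x H) := by
  intro U hU
  rw [isOpen_coinduced, preimage_image_leftCoset hH]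
  exact isOpen_biUnion fun h _ => hU.preimage (hc.1.comp (.prodMk_left h))
end

section
/- Let G be a topologically orderable gyrogroup and H a connected L-subgyrogroup of G containing at least two distinct elements. Then H is an open subset of G. -/
open Set Topology

universe u

/-!
A preconnected subset of a linearly ordered space containing two points `a < b` must meet
`(a, b)` (otherwise `Iio b` and `Ioi a` would separate it) and contains `[a, b]`, so it contains
the nonempty open interval `(a, b)`. A subgyrogroup with an interior point `c` is open: for
`h ∈ H` the continuous map `x ↦ c ⊕ (⊖h ⊕ x)` sends `h` to `c`, and `H` is closed under the
inverse map `y ↦ h ⊕ (⊖c ⊕ y)`.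
-/

namespace Gyrogroup

variable {G : Type u} [Gyrogroup G]

theorem gyr_one_left_apply (h f : G) : gyr one h f = f := by
  have hcancel : ∀ y : G, op (inv h) (op h y) = gyr (inv h) h y := fun y => by
    rw [gyr_op, inv_op, one_op]
  have hop : op h (gyr one h f) = op h f := by
    simpa only [one_op] using (gyr_op one h f).symm
  have := congrArg (op (inv h)) hop
  rw [hcancel, hcancel] at this
  exact (gyr (inv h) h).injective this

theorem inv_op_cancel_left (a x : G) : op (inv a) (op a x) = x := by
  have hloop : gyr (inv a) a = gyr one a := by rw [loop, inv_op]
  rw [gyr_op, inv_op, one_op, hloop, gyr_one_left_apply]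

theorem op_inv_cancel_left (a x : G) : op a (op (inv a) x) = x := by
  have hloop : gyr a (inv a) = gyr one (inv a) := by rw [loop, op_inv]
  rw [gyr_op, op_inv, one_op, hloop, gyr_one_left_apply]

theorem ContinuousGyroOps.continuous_op_left [TopologicalSpace G] (hc : ContinuousGyroOps G)
    (g : G) : Continuous (op g) :=
  hc.1.comp (continuous_const.prodMk continuous_id)

theorem IsSubgyrogroup.isOpen_of_interior_nonempty [TopologicalSpace G] {H : Set G}
    (hH : IsSubgyrogroup H) (hop : ∀ g : G, Continuous (op g)) (hint : (interior H).Nonempty) :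
    IsOpen H := by
  obtain ⟨-, -, hopH, hinvH, -⟩ := hH
  obtain ⟨c, hc⟩ := hint
  refine isOpen_iff_mem_nhds.2 fun h hh => ?_
  let f : G → G := fun x => op c (op (inv h) x)
  have hfh : f h = c := by simp only [f, inv_op, op_one]
  have hf : ContinuousAt f h := ((hop c).comp (hop (inv h))).continuousAt
  have hpre : f ⁻¹' interior H ∈ 𝓝 h := hf.preimage_mem_nhds (hfh ▸ isOpen_interior.mem_nhds hc)
  refine Filter.mem_of_superset hpre fun x hx => ?_
  have hx' : x = op h (op (inv c) (f x)) := by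
    simp only [f, inv_op_cancel_left, op_inv_cancel_left]
  rw [hx']
  exact hopH _ hh _ (hopH _ (hinvH _ (interior_subset hc)) _ (interior_subset hx))

end Gyrogroup

theorem IsPreconnected.exists_mem_Ioo {α : Type*} [LinearOrder α] [TopologicalSpace α]
    [OrderTopology α] {s : Set α} (hs : IsPreconnected s) {a b : α} (ha : a ∈ s) (hb : b ∈ s)
    (hab : a < b) : ∃ c ∈ s, c ∈ Ioo a b := by
  have hcover : s ⊆ Iio b ∪ Ioi a := fun x _ => (lt_or_ge x b).imp id hab.trans_le
  obtain ⟨c, hcs, hcb, hac⟩ :=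
    hs (Iio b) (Ioi a) isOpen_Iio isOpen_Ioi hcover ⟨a, ha, hab⟩ ⟨b, hb, hab⟩
  exact ⟨c, hcs, hac, hcb⟩

theorem IsPreconnected.interior_nonempty_of_ne {α : Type*} [LinearOrder α] [TopologicalSpace α]
    [OrderTopology α] {s : Set α} (hs : IsPreconnected s) {a b : α} (ha : a ∈ s) (hb : b ∈ s)
    (hab : a ≠ b) : (interior s).Nonempty := by
  wlog hlt : a < b generalizing a b
  · exact this hb ha hab.symm (hab.lt_or_gt.resolve_left hlt)
  obtain ⟨c, -, hc⟩ := hs.exists_mem_Ioo ha hb hlt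
  have hIoo : Ioo a b ⊆ s := Ioo_subset_Icc_self.trans (hs.Icc_subset ha hb)
  exact ⟨c, interior_maximal hIoo isOpen_Ioo hc⟩

open Gyrogroup

/-- In a topologically orderable gyrogroup, a connected L-subgyrogroup with at least
two elements is open. -/
theorem stmt5 {G : Type u} [Gyrogroup G] [TopologicalSpace G]
    (hc : ContinuousGyroOps G) (ho : TopologicallyOrderable G)
    (H : Set G) (hH : IsLSubgyrogroup H) (hconn : IsPreconnected H)
    (htwo : ∃ a ∈ H, ∃ b ∈ H, a ≠ b) :
    IsOpen H := by
  obtain ⟨l, hl⟩ := ho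
  let _ : LinearOrder G := l
  have : OrderTopology G := ⟨hl⟩
  obtain ⟨a, ha, b, hb, hab⟩ := htwo
  exact hH.1.isOpen_of_interior_nonempty hc.continuous_op_left
    (hconn.interior_nonempty_of_ne ha hb hab)
end
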